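/- For the two-qubit state σ' = (1/2)|φ⟩⟨φ| + (1/4)(|01⟩⟨01| + |10⟩⟨10|) with |φ⟩ = (|00⟩+|11⟩)/√2, the measure satisfies M(σ') = M^A(σ') = M^B(σ') = 1/2, which is nonzero; in particular σ' is detected as nonclassically correlated by M. -/

import Mathlib

open Matrix Kronecker Finset
open scoped ComplexOrder

attribute [local instance] Classical.propDecidable

noncomputable section

/-- nearest integer multiple of `y` to `x`, ties broken downward; `0` if `y = 0`. -/
def nim (y x : ℝ) : ℝ :=
  if y = 0 then 0
  else if x - y * ⌊x / y⌋ ≤ y * ⌈x / y⌉ - x then y * ⌊x / y⌋ else y * ⌈x / y⌉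

/-- partial trace over the second (B) factor -/
def ptraceB {α β : Type*} [Fintype α] [Fintype β]
    (ρ : Matrix (α × β) (α × β) ℂ) : Matrix α α ℂ :=
  fun a a' => ∑ b : β, ρ (a, b) (a', b)

/-- partial trace over the first (A) factor -/
def ptraceA {α β : Type*} [Fintype α] [Fintype β]
    (ρ : Matrix (α × β) (α × β) ℂ) : Matrix β β ℂ :=
  fun b b' => ∑ a : α, ρ (a, b) (a, b')

/-- the (real) eigenvalues of a Hermitian matrix, junk value `0` otherwise -/
def evalsR {n : Type*} [Fintype n] [DecidableEq n] (A : Matrix n n ℂ) : n → ℝ :=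
  if h : A.IsHermitian then h.eigenvalues else 0

/-- orthogonal projection onto the η-eigenspace of a Hermitian matrix -/
def eigProj {n : Type*} [Fintype n] [DecidableEq n] (ρ : Matrix n n ℂ) (η : ℝ) :
    Matrix n n ℂ :=
  if h : ρ.IsHermitian then
    ∑ k ∈ univ.filter (fun k => h.eigenvalues k = η),
      vecMulVec (fun i => h.eigenvectorBasis k i) (star fun i => h.eigenvectorBasis k i)
  else 0

/-- truncation of ρ down to the η-eigenspace: `η • P_η` -/
def trunc {n : Type*} [Fintype n] [DecidableEq n] (ρ : Matrix n n ℂ) (η : ℝ) :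
    Matrix n n ℂ := (η : ℂ) • eigProj ρ η

/-- dimension of the η-eigenspace -/
def dimEig {n : Type*} [Fintype n] [DecidableEq n] (ρ : Matrix n n ℂ) (η : ℝ) : ℕ :=
  if h : ρ.IsHermitian then (univ.filter (fun k => h.eigenvalues k = η)).card else 0

/-- a single term of the measure `M` -/
def Mterm (η T lam : ℝ) : ℝ := -(|lam - nim η lam| * Real.logb 2 (lam / T))

/-- the measure `M` seen from side A -/
def MmeasA {α β : Type*} [Fintype α] [Fintype β] [DecidableEq α] [DecidableEq β]
    (ρ : Matrix (α × β) (α × β) ℂ) : ℝ :=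
  ∑ η ∈ Finset.image (evalsR ρ) univ, ∑ i : α,
    Mterm η (η * (dimEig ρ η : ℝ)) (evalsR (ptraceB (trunc ρ η)) i)

/-- the measure `M` seen from side B -/
def MmeasB {α β : Type*} [Fintype α] [Fintype β] [DecidableEq α] [DecidableEq β]
    (ρ : Matrix (α × β) (α × β) ℂ) : ℝ :=
  ∑ η ∈ Finset.image (evalsR ρ) univ, ∑ i : β,
    Mterm η (η * (dimEig ρ η : ℝ)) (evalsR (ptraceA (trunc ρ η)) i)

/-- the measure `M` of nonclassical correlation -/
def Mmeas {α β : Type*} [Fintype α] [Fintype β] [DecidableEq α] [DecidableEq β]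
    (ρ : Matrix (α × β) (α × β) ℂ) : ℝ := (MmeasA ρ + MmeasB ρ) / 2

def IsDensityMatrix {n : Type*} [Fintype n] [DecidableEq n] (ρ : Matrix n n ℂ) : Prop :=
  ρ.PosSemidef ∧ ρ.trace = 1

/-- ρ admits an eigenbasis consisting of product vectors -/
def HasProductEigenbasis {α β : Type*} [Fintype α] [Fintype β] [DecidableEq α] [DecidableEq β]
    (ρ : Matrix (α × β) (α × β) ℂ) : Prop :=
  ∃ (a : α → α → ℂ) (b : β → β → ℂ) (e : α → β → ℝ),
    (∀ j j', ∑ i, star (a j i) * a j' i = if j = j' then 1 else 0) ∧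
    (∀ k k', ∑ i, star (b k i) * b k' i = if k = k' then 1 else 0) ∧
    ρ = ∑ j : α, ∑ k : β,
      (e j k : ℂ) • (vecMulVec (a j) (star (a j)) ⊗ₖ vecMulVec (b k) (star (b k)))


def ket00 : Fin 2 × Fin 2 → ℂ := fun p => if p = (0, 0) then 1 else 0
def ket01 : Fin 2 × Fin 2 → ℂ := fun p => if p = (0, 1) then 1 else 0
def ket10 : Fin 2 × Fin 2 → ℂ := fun p => if p = (1, 0) then 1 else 0
/-- `|1+⟩ = |1⟩ ⊗ (|0⟩ + |1⟩)/√2` -/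
def ket1p : Fin 2 × Fin 2 → ℂ := fun p => if p.1 = 1 then ((1 / Real.sqrt 2 : ℝ) : ℂ) else 0
/-- `|φ⟩ = (|00⟩ + |11⟩)/√2` -/
def ketBell : Fin 2 × Fin 2 → ℂ := fun p => if p.1 = p.2 then ((1 / Real.sqrt 2 : ℝ) : ℂ) else 0

/-- `σ' = (1/2)|φ⟩⟨φ| + (1/4)(|01⟩⟨01| + |10⟩⟨10|)` with `|φ⟩ = (|00⟩+|11⟩)/√2` -/
def sigmaP : Matrix (Fin 2 × Fin 2) (Fin 2 × Fin 2) ℂ :=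
  ((1 / 2 : ℝ) : ℂ) • vecMulVec ketBell (star ketBell)
  + ((1 / 4 : ℝ) : ℂ) • (vecMulVec ket01 (star ket01) + vecMulVec ket10 (star ket10))

/-! `σ' = ½ P + ¼ Q`, where `P = |φ⟩⟨φ|` and `Q = |01⟩⟨01| + |10⟩⟨10|` are orthogonal projections.
Hence `σ' (σ' - ¼) (σ' - ½) = 0`, every function of `σ'` vanishing at `0` is a polynomial in `σ'`,
and the eigenprojections of `σ'` for `½` and `¼` are `P` and `Q`, of ranks `tr P = 1` and
`tr Q = 2`. Both partial traces of `½ P` and of `¼ Q` are `I / 4`. For `η = ¼` the eigenvalue `¼`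
is a multiple of `η` and costs nothing; for `η = ½` it lies halfway between `0` and `½`, is rounded
down to `0`, and each of its two copies contributes `-¼ log₂ ((¼) / (½ · 1)) = ¼`. -/

section

variable {n : Type*} [Fintype n] [DecidableEq n] {A P Q : Matrix n n ℂ} {a b : ℝ}

lemma eigProj_eq_cfc (hA : A.IsHermitian) (η : ℝ) :
    eigProj A η = cfc (fun x : ℝ => if x = η then (1 : ℝ) else 0) A := by
  ext i j
  rw [hA.cfc_eq, IsHermitian.cfc, Unitary.conjStarAlgAut_apply, eigProj, dif_pos hA,
    Finset.sum_filter, Matrix.sum_apply, Matrix.mul_apply]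
  refine Finset.sum_congr rfl fun k _ => ?_
  split_ifs with h <;>
    simp [Matrix.mul_diagonal, vecMulVec_apply, IsHermitian.eigenvectorUnitary_apply, h]

lemma dimEig_eq_trace_eigProj (hA : A.IsHermitian) (η : ℝ) :
    (dimEig A η : ℂ) = (eigProj A η).trace := by
  rw [dimEig, eigProj, dif_pos hA, dif_pos hA, trace_sum, Finset.card_eq_sum_ones,
    Nat.cast_sum]
  refine Finset.sum_congr rfl fun k _ => ?_
  have hnorm := inner_self_eq_one_of_norm_eq_one (𝕜 := ℂ) (hA.eigenvectorBasis.orthonormal.1 k)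
  rw [EuclideanSpace.inner_eq_star_dotProduct] at hnorm
  rw [trace_vecMulVec]
  exact_mod_cast hnorm.symm

lemma coe_image_evalsR (hA : A.IsHermitian) :
    (Finset.image (evalsR A) univ : Set ℝ) = spectrum ℝ A := by
  rw [coe_image, coe_univ, Set.image_univ, evalsR, dif_pos hA,
    hA.spectrum_real_eq_range_eigenvalues]

lemma mem_image_evalsR_of_dimEig_ne_zero {η : ℝ} (h : dimEig A η ≠ 0) :
    η ∈ Finset.image (evalsR A) univ := by
  rw [dimEig] at h
  split_ifs at h with hA
  · obtain ⟨k, hk⟩ := Finset.card_ne_zero.mp h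
    rw [Finset.mem_filter] at hk
    exact Finset.mem_image.mpr ⟨k, mem_univ k, by rw [evalsR, dif_pos hA, hk.2]⟩
  · exact (h rfl).elim

lemma mul_sub_algebraMap_of_eq_smul_add_smul (hP : P * P = P) (hQ : Q * Q = Q)
    (hPQ : P * Q = 0) (hQP : Q * P = 0) (hAPQ : A = a • P + b • Q) :
    A * (A - algebraMap ℝ _ b) = (a * (a - b)) • P := by
  subst hAPQ
  simp only [Algebra.algebraMap_eq_smul_one, mul_add, add_mul, mul_sub, smul_mul_assoc,
    mul_smul_comm, hP, hQ, hPQ, hQP, mul_one, smul_zero]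
  module

lemma spectrum_subset_of_eq_smul_add_smul (hA : A.IsHermitian) (hP : P * P = P) (hQ : Q * Q = Q)
    (hPQ : P * Q = 0) (hQP : Q * P = 0) (hAPQ : A = a • P + b • Q) :
    spectrum ℝ A ⊆ {0, a, b} := by
  have hcubic : cfc (fun x : ℝ => x * (x - b) * (x - a)) A = cfc (0 : ℝ → ℝ) A := by
    have hPA : P * (A - algebraMap ℝ _ a) = 0 := by
      rw [hAPQ]
      simp only [Algebra.algebraMap_eq_smul_one, mul_add, mul_sub, mul_smul_comm, hP, hPQ,
        mul_one]
      module
    rw [cfc_mul .., cfc_mul .., cfc_sub .., cfc_sub .., cfc_id' .., cfc_const .., cfc_const ..,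
      cfc_zero, mul_sub_algebraMap_of_eq_smul_add_smul hP hQ hPQ hQP hAPQ, smul_mul_assoc, hPA,
      smul_zero]
  intro x hx
  have hEqOn := eqOn_of_cfc_eq_cfc hcubic
  have hroot := hEqOn hx
  simp only [Pi.zero_apply, mul_eq_zero, sub_eq_zero] at hroot
  simp only [Set.mem_insert_iff, Set.mem_singleton_iff]
  tauto

lemma cfc_of_eq_smul_add_smul (hA : A.IsHermitian) (hP : P * P = P) (hQ : Q * Q = Q)
    (hPQ : P * Q = 0) (hQP : Q * P = 0) (hAPQ : A = a • P + b • Q)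
    (ha : a ≠ 0) (hb : b ≠ 0) (hab : a ≠ b) {f : ℝ → ℝ} (hf : f 0 = 0) :
    cfc f A = f a • P + f b • Q := by
  have hba : b - a ≠ 0 := sub_ne_zero.mpr hab.symm
  have hab' : a - b ≠ 0 := sub_ne_zero.mpr hab
  -- On the spectrum `{0, a, b}`, `f` is the Lagrange interpolant vanishing at `0`.
  have hinterp : (spectrum ℝ A).EqOn f fun x =>
      f a / (a * (a - b)) * (x * (x - b)) + f b / (b * (b - a)) * (x * (x - a)) := by
    intro x hx
    rcases spectrum_subset_of_eq_smul_add_smul hA hP hQ hPQ hQP hAPQ hx with rfl | rfl | rfl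
    · simp [hf]
    · field_simp; ring
    · field_simp; ring
  rw [cfc_congr hinterp, cfc_add .., cfc_const_mul .., cfc_const_mul .., cfc_mul .., cfc_mul ..,
    cfc_sub .., cfc_sub .., cfc_id' .., cfc_const .., cfc_const ..,
    mul_sub_algebraMap_of_eq_smul_add_smul hP hQ hPQ hQP hAPQ,
    mul_sub_algebraMap_of_eq_smul_add_smul hQ hP hQP hPQ (hAPQ.trans (add_comm _ _)), smul_smul,
    smul_smul, div_mul_cancel₀ _ (mul_ne_zero ha hab'), div_mul_cancel₀ _ (mul_ne_zero hb hba)]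

lemma eigProj_of_eq_smul_add_smul (hA : A.IsHermitian) (hP : P * P = P) (hQ : Q * Q = Q)
    (hPQ : P * Q = 0) (hQP : Q * P = 0) (hAPQ : A = a • P + b • Q)
    (ha : a ≠ 0) (hb : b ≠ 0) (hab : a ≠ b) : eigProj A a = P := by
  rw [eigProj_eq_cfc hA, cfc_of_eq_smul_add_smul hA hP hQ hPQ hQP hAPQ ha hb hab
    (f := fun x => if x = a then 1 else 0) (if_neg ha.symm), if_pos rfl, if_neg hab.symm,
    one_smul, zero_smul, add_zero]

end

lemma evalsR_ofReal_smul_one {n : Type*} [Fintype n] [DecidableEq n] (c : ℝ) (i : n) :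
    evalsR ((c : ℂ) • (1 : Matrix n n ℂ)) i = c := by
  have hc : (c : ℂ) • (1 : Matrix n n ℂ) = algebraMap ℝ (Matrix n n ℂ) c := by
    rw [Algebra.algebraMap_eq_smul_one, RCLike.real_smul_eq_coe_smul (K := ℂ)]
    rfl
  have hherm : ((c : ℂ) • (1 : Matrix n n ℂ)).IsHermitian :=
    hc ▸ IsSelfAdjoint.algebraMap _ (IsSelfAdjoint.all c)
  have : Nonempty n := ⟨i⟩
  have hmem : hherm.eigenvalues i ∈ spectrum ℝ (algebraMap ℝ (Matrix n n ℂ) c) := by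
    rw [← hc]
    exact hherm.eigenvalues_mem_spectrum_real i
  rw [spectrum.scalar_eq] at hmem
  rw [evalsR, dif_pos hherm]
  exact hmem

lemma vecMulVec_star_mul_vecMulVec_star {n : Type*} [Fintype n] (u v : n → ℂ) :
    vecMulVec u (star u) * vecMulVec v (star v) = (star u ⬝ᵥ v) • vecMulVec u (star v) := by
  rw [vecMulVec_mul_vecMulVec, vecMulVec_smul]

lemma ptraceB_smul {α β : Type*} [Fintype α] [Fintype β] (c : ℂ)
    (ρ : Matrix (α × β) (α × β) ℂ) : ptraceB (c • ρ) = c • ptraceB ρ := by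
  ext a a'
  simp [ptraceB, Finset.mul_sum]

lemma ptraceA_smul {α β : Type*} [Fintype α] [Fintype β] (c : ℂ)
    (ρ : Matrix (α × β) (α × β) ℂ) : ptraceA (c • ρ) = c • ptraceA ρ := by
  ext b b'
  simp [ptraceA, Finset.mul_sum]

lemma nim_self {y : ℝ} (hy : y ≠ 0) : nim y y = y := by
  simp [nim, hy]

lemma nim_half_self {y : ℝ} (hy : 0 < y) : nim y (y / 2) = 0 := by
  have hfloor : ⌊y / 2 / y⌋ = 0 := by
    rw [Int.floor_eq_iff, div_div_cancel_left' hy.ne']; norm_num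
  have hceil : ⌈y / 2 / y⌉ = 1 := by
    rw [Int.ceil_eq_iff, div_div_cancel_left' hy.ne']; norm_num
  rw [nim, if_neg hy.ne', hfloor, hceil, if_pos (by push_cast; linarith)]
  simp

-- `lam / 0 = 0` and `logb 2 0 = 0`.
lemma Mterm_zero_zero (lam : ℝ) : Mterm 0 0 lam = 0 := by
  simp [Mterm]

lemma Mterm_self {η : ℝ} (hη : η ≠ 0) (T : ℝ) : Mterm η T η = 0 := by
  simp [Mterm, nim_self hη]

lemma Mterm_half_self {y : ℝ} (hy : 0 < y) : Mterm y y (y / 2) = y / 2 := by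
  rw [Mterm, nim_half_self hy, sub_zero, abs_of_pos (half_pos hy), div_div_cancel_left' hy.ne',
    Real.logb_inv, Real.logb_self_eq_one one_lt_two]
  ring

lemma ofReal_inv_sqrt_two_mul_self : ((√2 : ℝ) : ℂ)⁻¹ * ((√2 : ℝ) : ℂ)⁻¹ = 2⁻¹ := by
  rw [← mul_inv, ← Complex.ofReal_mul, Real.mul_self_sqrt zero_le_two, Complex.ofReal_ofNat]

def bellProj : Matrix (Fin 2 × Fin 2) (Fin 2 × Fin 2) ℂ := vecMulVec ketBell (star ketBell)

def oddProj : Matrix (Fin 2 × Fin 2) (Fin 2 × Fin 2) ℂ :=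
  vecMulVec ket01 (star ket01) + vecMulVec ket10 (star ket10)

lemma bellProj_mul_self : bellProj * bellProj = bellProj := by
  simp [bellProj, vecMulVec_star_mul_vecMulVec_star, dotProduct, Fintype.sum_prod_type, ketBell,
    ofReal_inv_sqrt_two_mul_self]

lemma oddProj_mul_self : oddProj * oddProj = oddProj := by
  simp [oddProj, mul_add, add_mul, vecMulVec_star_mul_vecMulVec_star, dotProduct, ket01, ket10]

lemma bellProj_mul_oddProj : bellProj * oddProj = 0 := by
  simp [bellProj, oddProj, mul_add, vecMulVec_star_mul_vecMulVec_star, dotProduct, ketBell,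
    ket01, ket10]

lemma oddProj_mul_bellProj : oddProj * bellProj = 0 := by
  simp [bellProj, oddProj, add_mul, vecMulVec_star_mul_vecMulVec_star, dotProduct,
    Fintype.sum_prod_type, ketBell, ket01, ket10]

lemma trace_bellProj : bellProj.trace = 1 := by
  simp [bellProj, dotProduct, Fintype.sum_prod_type, ketBell, ofReal_inv_sqrt_two_mul_self]

lemma trace_oddProj : oddProj.trace = 2 := by
  simp [oddProj, dotProduct, ket01, ket10]
  norm_num

lemma ptraceB_bellProj : ptraceB bellProj = ((1 / 2 : ℝ) : ℂ) • 1 := by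
  ext a b
  fin_cases a <;> fin_cases b <;>
    simp [ptraceB, bellProj, ketBell, vecMulVec_apply, ofReal_inv_sqrt_two_mul_self]

lemma ptraceA_bellProj : ptraceA bellProj = ((1 / 2 : ℝ) : ℂ) • 1 := by
  ext a b
  fin_cases a <;> fin_cases b <;>
    simp [ptraceA, bellProj, ketBell, vecMulVec_apply, ofReal_inv_sqrt_two_mul_self]

lemma ptraceB_oddProj : ptraceB oddProj = 1 := by
  ext a b
  fin_cases a <;> fin_cases b <;> simp [ptraceB, oddProj, ket01, ket10, vecMulVec_apply]

lemma ptraceA_oddProj : ptraceA oddProj = 1 := by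
  ext a b
  fin_cases a <;> fin_cases b <;> simp [ptraceA, oddProj, ket01, ket10, vecMulVec_apply]

lemma sigmaP_eq : sigmaP = (1 / 2 : ℝ) • bellProj + (1 / 4 : ℝ) • oddProj := by
  simp only [sigmaP, bellProj, oddProj, RCLike.real_smul_eq_coe_smul (K := ℂ)]
  rfl

lemma sigmaP_isHermitian : sigmaP.IsHermitian := by
  rw [sigmaP_eq]
  exact (((posSemidef_vecMulVec_self_star _).smul (by norm_num)).add
    (((posSemidef_vecMulVec_self_star _).add (posSemidef_vecMulVec_self_star _)).smul
      (by norm_num))).isHermitian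

lemma eigProj_sigmaP_half : eigProj sigmaP (1 / 2) = bellProj :=
  eigProj_of_eq_smul_add_smul sigmaP_isHermitian bellProj_mul_self oddProj_mul_self
    bellProj_mul_oddProj oddProj_mul_bellProj sigmaP_eq (by norm_num) (by norm_num) (by norm_num)

lemma eigProj_sigmaP_quarter : eigProj sigmaP (1 / 4) = oddProj :=
  eigProj_of_eq_smul_add_smul sigmaP_isHermitian oddProj_mul_self bellProj_mul_self
    oddProj_mul_bellProj bellProj_mul_oddProj (sigmaP_eq.trans (add_comm _ _))
    (by norm_num) (by norm_num) (by norm_num)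

lemma dimEig_sigmaP_half : dimEig sigmaP (1 / 2) = 1 := by
  have h := dimEig_eq_trace_eigProj sigmaP_isHermitian (1 / 2)
  rw [eigProj_sigmaP_half, trace_bellProj] at h
  exact_mod_cast h

lemma dimEig_sigmaP_quarter : dimEig sigmaP (1 / 4) = 2 := by
  have h := dimEig_eq_trace_eigProj sigmaP_isHermitian (1 / 4)
  rw [eigProj_sigmaP_quarter, trace_oddProj] at h
  exact_mod_cast h

lemma insert_zero_image_evalsR_sigmaP :
    insert 0 (Finset.image (evalsR sigmaP) univ) = {0, 1 / 4, 1 / 2} := by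
  have hspec : spectrum ℝ sigmaP ⊆ {0, 1 / 2, 1 / 4} :=
    spectrum_subset_of_eq_smul_add_smul sigmaP_isHermitian bellProj_mul_self oddProj_mul_self
      bellProj_mul_oddProj oddProj_mul_bellProj sigmaP_eq
  have hhalf := mem_image_evalsR_of_dimEig_ne_zero (A := sigmaP) (η := 1 / 2)
    (by rw [dimEig_sigmaP_half]; norm_num)
  have hquarter := mem_image_evalsR_of_dimEig_ne_zero (A := sigmaP) (η := 1 / 4)
    (by rw [dimEig_sigmaP_quarter]; norm_num)
  ext x
  constructor
  · intro hx
    rcases Finset.mem_insert.mp hx with rfl | hx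
    · simp
    · have hx : x ∈ spectrum ℝ sigmaP := by
        rw [← coe_image_evalsR sigmaP_isHermitian]
        exact hx
      rcases hspec hx with rfl | rfl | rfl <;> simp
  · intro hx
    simp only [Finset.mem_insert, Finset.mem_singleton] at hx
    rcases hx with rfl | rfl | rfl
    · exact Finset.mem_insert_self _ _
    · exact Finset.mem_insert_of_mem hquarter
    · exact Finset.mem_insert_of_mem hhalf

lemma sum_Mterm_sigmaP (R : Matrix (Fin 2 × Fin 2) (Fin 2 × Fin 2) ℂ → Matrix (Fin 2) (Fin 2) ℂ)
    (hR : ∀ (c : ℂ) ρ, R (c • ρ) = c • R ρ) (hBell : R bellProj = ((1 / 2 : ℝ) : ℂ) • 1)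
    (hOdd : R oddProj = 1) :
    ∑ η ∈ Finset.image (evalsR sigmaP) univ, ∑ i : Fin 2,
      Mterm η (η * (dimEig sigmaP η : ℝ)) (evalsR (R (trunc sigmaP η)) i) = 1 / 2 := by
  have hhalf : R (trunc sigmaP (1 / 2)) = ((1 / 4 : ℝ) : ℂ) • 1 := by
    rw [trunc, eigProj_sigmaP_half, hR, hBell, smul_smul, ← Complex.ofReal_mul]
    norm_num
  have hquarter : R (trunc sigmaP (1 / 4)) = ((1 / 4 : ℝ) : ℂ) • 1 := by
    rw [trunc, eigProj_sigmaP_quarter, hR, hOdd]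
  -- The `η = 0` summand vanishes, so `0` may be added to the eigenvalues without knowing
  -- whether it is one.
  rw [← Finset.sum_insert_zero (a := 0) (by simp [Mterm_zero_zero]),
    insert_zero_image_evalsR_sigmaP, Finset.sum_insert (by norm_num),
    Finset.sum_insert (by norm_num), Finset.sum_singleton, hhalf, hquarter, dimEig_sigmaP_half,
    dimEig_sigmaP_quarter]
  simp only [zero_mul, Mterm_zero_zero, evalsR_ofReal_smul_one,
    Mterm_self (by norm_num : (1 / 4 : ℝ) ≠ 0), Nat.cast_one, mul_one, Finset.sum_const_zero,
    zero_add]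
  rw [show (1 / 4 : ℝ) = 1 / 2 / 2 by norm_num, Mterm_half_self one_half_pos, Finset.sum_const,
    Finset.card_univ, Fintype.card_fin]
  norm_num

/-- `M(σ') = M^A(σ') = M^B(σ') = 1/2 > 0`, so `M` detects σ' as
nonclassically correlated. -/
theorem Mmeas_sigmaP_eq_half :
    MmeasA sigmaP = 1 / 2 ∧ MmeasB sigmaP = 1 / 2 ∧ Mmeas sigmaP = 1 / 2 ∧
    0 < Mmeas sigmaP := by
  have hA : MmeasA sigmaP = 1 / 2 :=
    sum_Mterm_sigmaP ptraceB ptraceB_smul ptraceB_bellProj ptraceB_oddProj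
  have hB : MmeasB sigmaP = 1 / 2 :=
    sum_Mterm_sigmaP ptraceA ptraceA_smul ptraceA_bellProj ptraceA_oddProj
  have hM : Mmeas sigmaP = 1 / 2 := by
    rw [Mmeas, hA, hB]
    norm_num
  exact ⟨hA, hB, hM, hM ▸ one_half_pos⟩

end
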